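/- Consider the network SIR system s' = -β diag(s)Ax, x' = β diag(s)Ax - γx. Fix τ ≥ 0 and let λ(τ) and v(τ) ≫ 0 be the Perron eigenvalue and left Perron eigenvector of diag(s(τ))A. If βλ(τ) < γ, then for t ≥ τ the weighted average v(τ)^⊤ x(t) satisfies v(τ)^⊤x(t) ≤ (v(τ)^⊤x(τ))·e^{(βλ(τ)-γ)(t-τ)}, hence decays exponentially to zero. -/

import Mathlib

/-!
Since `s` only decreases, `diag(s(t)) A ≤ diag(s(τ)) A` entrywise, so for `x(t) ≥ 0` the weighted
infection term `vᵀ diag(s(t)) A x(t)` is at most `vᵀ diag(s(τ)) A x(t) = λ(τ) vᵀ x(t)`. Hence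
`V(t) = vᵀ x(t)` satisfies the linear differential inequality `V' ≤ (βλ(τ) - γ) V`, and
Grönwall's inequality gives the exponential bound.
-/

open Matrix Real

/-- A nonnegative matrix is irreducible (its digraph is strongly connected). -/
def MatIrreducible {n : ℕ} (A : Matrix (Fin n) (Fin n) ℝ) : Prop :=
  ∀ i j : Fin n, ∃ k : ℕ, 0 < (A ^ k) i j

lemma le_mul_exp_of_hasDerivAt_le_mul {f f' : ℝ → ℝ} {c τ : ℝ}
    (hf : ∀ u, τ ≤ u → HasDerivAt f (f' u) u) (hbound : ∀ u, τ ≤ u → f' u ≤ c * f u)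
    {t : ℝ} (ht : τ ≤ t) : f t ≤ f τ * exp (c * (t - τ)) := by
  have hcont : ContinuousOn f (Set.Icc τ t) :=
    fun u hu => (hf u hu.1).continuousAt.continuousWithinAt
  have := le_gronwallBound_of_liminf_deriv_right_le (K := c) (ε := 0) hcont
    (fun u hu _ hr => (hf u hu.1).hasDerivWithinAt.liminf_right_slope_le hr) le_rfl
    (fun u hu => by rw [add_zero]; exact hbound u hu.1) t ⟨ht, le_rfl⟩
  rwa [gronwallBound_ε0] at this

lemma dotProduct_mulVec_le_of_le_of_vecMul_eq {ι R : Type*} [Fintype ι] [CommSemiring R]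
    [PartialOrder R] [IsOrderedRing R] {M N : Matrix ι ι R} {v x : ι → R} {μ : R}
    (hMN : ∀ i j, M i j ≤ N i j) (hv : 0 ≤ v) (hx : 0 ≤ x) (hN : v ᵥ* N = μ • v) :
    v ⬝ᵥ (M *ᵥ x) ≤ μ * (v ⬝ᵥ x) :=
  calc v ⬝ᵥ (M *ᵥ x) ≤ v ⬝ᵥ (N *ᵥ x) :=
        dotProduct_le_dotProduct_of_nonneg_left
          (fun i => dotProduct_le_dotProduct_of_nonneg_right (fun j => hMN i j) hx) hv
    _ = μ * (v ⬝ᵥ x) := by rw [dotProduct_mulVec, hN, smul_dotProduct, smul_eq_mul]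

def sirInfectedField {ι : Type*} [Fintype ι] (A : Matrix ι ι ℝ) (β γ : ℝ) (s x : ι → ℝ) :
    ι → ℝ :=
  fun i => β * s i * (∑ j, A i j * x j) - γ * x i

lemma sirInfectedField_eq {ι : Type*} [Fintype ι] [DecidableEq ι] (A : Matrix ι ι ℝ)
    (β γ : ℝ) (s x : ι → ℝ) :
    sirInfectedField A β γ s x = β • ((diagonal s * A) *ᵥ x) - γ • x := by
  ext i
  simp only [sirInfectedField, Pi.sub_apply, Pi.smul_apply, smul_eq_mul, ← mulVec_mulVec,
    mulVec_diagonal, mul_assoc]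
  rfl

lemma dotProduct_sirInfectedField_le {ι : Type*} [Fintype ι] [DecidableEq ι]
    {A : Matrix ι ι ℝ} (hA : ∀ i j, 0 ≤ A i j) {β γ μ : ℝ} (hβ : 0 ≤ β) {s s₀ x v : ι → ℝ}
    (hs : s ≤ s₀) (hx : 0 ≤ x) (hv : 0 ≤ v) (heig : v ᵥ* (diagonal s₀ * A) = μ • v) :
    v ⬝ᵥ sirInfectedField A β γ s x ≤ (β * μ - γ) * (v ⬝ᵥ x) := by
  have hM : ∀ i j, (diagonal s * A) i j ≤ (diagonal s₀ * A) i j := fun i j => by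
    simpa only [diagonal_mul] using mul_le_mul_of_nonneg_right (hs i) (hA i j)
  calc v ⬝ᵥ sirInfectedField A β γ s x
        = β * (v ⬝ᵥ ((diagonal s * A) *ᵥ x)) - γ * (v ⬝ᵥ x) := by
          rw [sirInfectedField_eq, dotProduct_sub, dotProduct_smul, dotProduct_smul, smul_eq_mul,
            smul_eq_mul]
    _ ≤ β * (μ * (v ⬝ᵥ x)) - γ * (v ⬝ᵥ x) := by
          gcongr
          exact dotProduct_mulVec_le_of_le_of_vecMul_eq hM hv hx heig
    _ = (β * μ - γ) * (v ⬝ᵥ x) := by ring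

theorem network_SIR_below_threshold_decay_general
    {n : ℕ} (A : Matrix (Fin n) (Fin n) ℝ)
    (hA : ∀ i j, 0 ≤ A i j)
    (β γ : ℝ) (hβ : 0 < β)
    (s x : ℝ → Fin n → ℝ) (τ : ℝ)
    (lam : ℝ) (v : Fin n → ℝ) (hv : ∀ i, 0 < v i)
    (heig : ∀ j, ∑ i, v i * (s τ i * A i j) = lam * v j)
    (hxpos : ∀ t : ℝ, τ ≤ t → ∀ i, 0 ≤ x t i)
    (hsmono : ∀ t₁ t₂ : ℝ, τ ≤ t₁ → t₁ ≤ t₂ → ∀ i, s t₂ i ≤ s t₁ i)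
    (hderivx : ∀ t : ℝ, τ ≤ t → ∀ i,
      HasDerivAt (fun u => x u i)
        (β * s t i * (∑ j, A i j * x t j) - γ * x t i) t) :
    ∀ t : ℝ, τ ≤ t →
      ∑ i, v i * x t i ≤ (∑ i, v i * x τ i) * Real.exp ((β * lam - γ) * (t - τ)) := by
  have hleft : v ᵥ* (diagonal (s τ) * A) = lam • v := by
    ext j
    simpa only [vecMul, dotProduct, diagonal_mul, Pi.smul_apply, smul_eq_mul] using heig j
  intro t ht
  exact le_mul_exp_of_hasDerivAt_le_mul (f := fun u => v ⬝ᵥ x u)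
    (fun u hu => HasDerivAt.fun_sum fun i _ => (hderivx u hu i).const_mul (v i))
    (fun u hu => dotProduct_sirInfectedField_le hA hβ.le (hsmono τ u le_rfl hu) (hxpos u hu)
      (fun i => (hv i).le) hleft) ht

/-- For the network SIR system, fix τ ≥ 0 and let λ(τ), v(τ) ≫ 0 be
the Perron eigenvalue and left Perron eigenvector of diag(s(τ))A. If βλ(τ) < γ,
then for t ≥ τ, v(τ)ᵀx(t) ≤ (v(τ)ᵀx(τ))·e^{(βλ(τ)-γ)(t-τ)}. -/
theorem network_SIR_below_threshold_decay
    {n : ℕ} (A : Matrix (Fin n) (Fin n) ℝ)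
    (hA : ∀ i j, 0 ≤ A i j) (hirr : MatIrreducible A)
    (β γ : ℝ) (hβ : 0 < β) (hγ : 0 < γ)
    (s x : ℝ → Fin n → ℝ) (τ : ℝ) (hτ : 0 ≤ τ)
    (lam : ℝ) (v : Fin n → ℝ) (hv : ∀ i, 0 < v i)
    (heig : ∀ j, ∑ i, v i * (s τ i * A i j) = lam * v j)
    (hthr : β * lam < γ)
    (hxpos : ∀ t : ℝ, τ ≤ t → ∀ i, 0 ≤ x t i)
    (hsmono : ∀ t₁ t₂ : ℝ, τ ≤ t₁ → t₁ ≤ t₂ → ∀ i, s t₂ i ≤ s t₁ i)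
    (hderivs : ∀ t : ℝ, τ ≤ t → ∀ i,
      HasDerivAt (fun u => s u i) (-(β * s t i * ∑ j, A i j * x t j)) t)
    (hderivx : ∀ t : ℝ, τ ≤ t → ∀ i,
      HasDerivAt (fun u => x u i)
        (β * s t i * (∑ j, A i j * x t j) - γ * x t i) t) :
    ∀ t : ℝ, τ ≤ t →
      ∑ i, v i * x t i ≤ (∑ i, v i * x τ i) * Real.exp ((β * lam - γ) * (t - τ)) :=
  network_SIR_below_threshold_decay_general A hA β γ hβ s x τ lam v hv heig hxpos hsmono hderivx
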